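/- For 0 < α < 1, the conformal module of the doubly-connected domain 𝔻 ∖ [−α, α] (the open unit disc minus the closed segment [−α,α] of the real axis) equals (1/2π)·log Φ(½(α + 1/α)). -/

import Mathlib

/-!
The Möbius map `w ↦ (1 + α w) / (w + α)` carries the slit disc onto the Grötzsch domain with
parameter `R = (α + 1/α) / 2`: it swaps the inside and the outside of the unit circle, preserves
the real axis, and sends the slit `[-α, α]` onto the ray `[R, ∞]` (`-α ↦ ∞`, `α ↦ R`).
Composing it with the conformal map of the Grötzsch domain onto `{1 < |z| < Φ R}` gives the claim.
-/

open Complex Set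

/-- The round annulus {z : r < |z| < s}. -/
def Annulus (r s : ℝ) : Set ℂ :=
  {z : ℂ | r < ‖z‖ ∧ ‖z‖ < s}

/-- Conformal equivalence of planar domains: there is a holomorphic bijection. -/
def ConformallyEquiv (U V : Set ℂ) : Prop :=
  ∃ f : ℂ → ℂ, DifferentiableOn ℂ f U ∧ Set.BijOn f U V

/-- The Grötzsch domain: ℂ minus the closed unit disc and the ray [R,∞). -/
def GrotzschDomain (R : ℝ) : Set ℂ :=
  {z : ℂ | 1 < ‖z‖} \ {z : ℂ | z.im = 0 ∧ R ≤ z.re}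

/-- Φ is the Grötzsch modulus function: for each R > 1, Φ(R) > 1 and the
Grötzsch domain is conformally equivalent to the annulus {1 < |z| < Φ(R)}. -/
def IsGrotzschModulus (Φ : ℝ → ℝ) : Prop :=
  ∀ R : ℝ, 1 < R → 1 < Φ R ∧ ConformallyEquiv (GrotzschDomain R) (Annulus 1 (Φ R))

/-- A doubly-connected planar domain U has conformal module m if U is conformally
equivalent to a round annulus {1 < |z| < ρ} with m = (1/2π)·log ρ. -/
def HasConformalModule (U : Set ℂ) (m : ℝ) : Prop :=
  ∃ ρ : ℝ, 1 < ρ ∧ ConformallyEquiv U (Annulus 1 ρ) ∧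
    m = (1 / (2 * Real.pi)) * Real.log ρ

theorem ConformallyEquiv.trans {U V W : Set ℂ} (hUV : ConformallyEquiv U V)
    (hVW : ConformallyEquiv V W) : ConformallyEquiv U W := by
  obtain ⟨f, hf, hfUV⟩ := hUV
  obtain ⟨g, hg, hgVW⟩ := hVW
  exact ⟨g ∘ f, hg.comp hf hfUV.mapsTo, hgVW.comp hfUV⟩

def SlitDisc (a : ℝ) : Set ℂ :=
  Metric.ball 0 1 \ {z : ℂ | z.im = 0 ∧ -a ≤ z.re ∧ z.re ≤ a}

noncomputable def slitMobius (a : ℝ) (w : ℂ) : ℂ :=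
  (1 + a * w) / (w + a)

theorem one_lt_half_mul_add_inv {a : ℝ} (ha0 : 0 < a) (ha1 : a ≠ 1) :
    1 < (1 / 2) * (a + 1 / a) := by
  have hsq : 0 < (a - 1) ^ 2 := by positivity [sub_ne_zero.mpr ha1]
  rw [← sub_pos, show (1 / 2) * (a + 1 / a) - 1 = (a - 1) ^ 2 / (2 * a) by field_simp; ring]
  exact div_pos hsq (by positivity)

section slitMobius

variable {a : ℝ}

theorem normSq_add_ofReal_pos {w : ℂ} (hw : w ≠ -a) : 0 < normSq (w + a) :=
  normSq_pos.mpr (by rwa [Ne, add_eq_zero_iff_eq_neg])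

theorem normSq_one_add_mul_sub_normSq_add (a : ℝ) (w : ℂ) :
    normSq (1 + a * w) - normSq (w + a) = (1 - a ^ 2) * (1 - normSq w) := by
  simp only [normSq_apply, add_re, add_im, mul_re, mul_im, one_re, one_im, ofReal_re, ofReal_im]
  ring

theorem slitMobius_im (a : ℝ) (w : ℂ) :
    (slitMobius a w).im = (a ^ 2 - 1) * w.im / normSq (w + a) := by
  rw [slitMobius, div_im]
  simp only [add_re, add_im, mul_re, mul_im, one_re, one_im, ofReal_re, ofReal_im]
  ring

theorem slitMobius_ofReal (a x : ℝ) : slitMobius a x = ((1 + a * x) / (x + a) : ℝ) := by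
  push_cast [slitMobius]
  rfl

theorem one_lt_norm_slitMobius_iff (ha : a ^ 2 < 1) {w : ℂ} (hw : w ≠ -a) :
    1 < ‖slitMobius a w‖ ↔ ‖w‖ < 1 := by
  rw [← one_lt_sq_iff₀ (norm_nonneg _), ← sq_lt_one_iff₀ (norm_nonneg _), Complex.sq_norm,
    Complex.sq_norm, slitMobius, normSq_div, one_lt_div (normSq_add_ofReal_pos hw), ← sub_pos,
    normSq_one_add_mul_sub_normSq_add, mul_pos_iff_of_pos_left (by linarith), sub_pos]

theorem slitMobius_im_eq_zero_iff (ha : a ^ 2 ≠ 1) {w : ℂ} (hw : w ≠ -a) :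
    (slitMobius a w).im = 0 ↔ w.im = 0 := by
  simp [slitMobius_im, (normSq_add_ofReal_pos hw).ne', sub_eq_zero, ha]

theorem half_mul_add_inv_le_div_iff (ha0 : 0 < a) (ha1 : a < 1) {x : ℝ} (hx : x ≠ -a) :
    (1 / 2) * (a + 1 / a) ≤ (1 + a * x) / (x + a) ↔ -a ≤ x ∧ x ≤ a := by
  have hxa : x + a ≠ 0 := fun h => hx (eq_neg_of_add_eq_zero_left h)
  have key : (1 + a * x) / (x + a) - (1 / 2) * (a + 1 / a) =
      (1 - a ^ 2) / (2 * a) * ((a - x) / (x + a)) := by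
    field_simp
    ring
  have hc : 0 < (1 - a ^ 2) / (2 * a) := div_pos (by nlinarith) (by positivity)
  rw [← sub_nonneg, key, mul_nonneg_iff_of_pos_left hc, div_nonneg_iff]
  constructor
  · rintro (⟨h₁, h₂⟩ | ⟨h₁, h₂⟩)
    · exact ⟨by linarith, by linarith⟩
    · linarith
  · rintro ⟨h₁, h₂⟩
    exact Or.inl ⟨by linarith, by linarith⟩

theorem slitMobius_mem_grotzschDomain_iff (ha0 : 0 < a) (ha1 : a < 1) {w : ℂ} (hw : w ≠ -a) :
    slitMobius a w ∈ GrotzschDomain ((1 / 2) * (a + 1 / a)) ↔ w ∈ SlitDisc a := by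
  have ha2 : a ^ 2 < 1 := by nlinarith
  simp only [GrotzschDomain, SlitDisc, mem_sdiff, mem_ofPred_eq, mem_ball_zero_iff]
  rw [one_lt_norm_slitMobius_iff ha2 hw, slitMobius_im_eq_zero_iff ha2.ne hw]
  refine and_congr_right' (not_congr (and_congr_right fun him => ?_))
  obtain ⟨x, rfl⟩ : ∃ x : ℝ, w = x := ⟨w.re, Complex.ext rfl (by simp [him])⟩
  rw [slitMobius_ofReal, ofReal_re, ofReal_re]
  exact half_mul_add_inv_le_div_iff ha0 ha1 (by exact_mod_cast hw)

theorem injOn_slitMobius (ha : a ^ 2 ≠ 1) : InjOn (slitMobius a) {w | w ≠ -a} := by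
  intro w₁ hw₁ w₂ hw₂ h
  rw [slitMobius, slitMobius, div_eq_div_iff (normSq_pos.mp (normSq_add_ofReal_pos hw₁))
    (normSq_pos.mp (normSq_add_ofReal_pos hw₂))] at h
  have hc : (1 : ℂ) - a ^ 2 ≠ 0 := by exact_mod_cast sub_ne_zero.mpr (Ne.symm ha)
  have : ((1 : ℂ) - a ^ 2) * (w₂ - w₁) = 0 := by linear_combination h
  exact (sub_eq_zero.mp ((mul_eq_zero.mp this).resolve_left hc)).symm

theorem exists_slitMobius_eq (ha : a ^ 2 ≠ 1) {z : ℂ} (hz : z ≠ a) :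
    ∃ w : ℂ, w ≠ -a ∧ slitMobius a w = z := by
  have hza : z - a ≠ 0 := sub_ne_zero.mpr hz
  have hc : (1 : ℂ) - a ^ 2 ≠ 0 := by exact_mod_cast sub_ne_zero.mpr (Ne.symm ha)
  have hwa : (1 - a * z) / (z - a) + a = (1 - a ^ 2) / (z - a) := by
    field_simp
    ring
  refine ⟨(1 - a * z) / (z - a), fun h => ?_, ?_⟩
  · rw [h, neg_add_cancel] at hwa
    exact div_ne_zero hc hza hwa.symm
  · rw [slitMobius, hwa]
    field_simp
    ring

theorem differentiableOn_slitMobius (a : ℝ) :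
    DifferentiableOn ℂ (slitMobius a) {w | w ≠ -a} :=
  DifferentiableOn.div (by fun_prop) (by fun_prop) fun _ hw =>
    normSq_pos.mp (normSq_add_ofReal_pos hw)

theorem slitDisc_subset_ne_neg (ha : 0 ≤ a) : SlitDisc a ⊆ {w | w ≠ -a} := by
  rintro w ⟨-, hw⟩ rfl
  exact hw ⟨by simp, by simp, by simpa using neg_le_self ha⟩

theorem bijOn_slitMobius (ha0 : 0 < a) (ha1 : a < 1) :
    BijOn (slitMobius a) (SlitDisc a) (GrotzschDomain ((1 / 2) * (a + 1 / a))) := by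
  have ha2 : a ^ 2 ≠ 1 := by nlinarith
  have hsub := slitDisc_subset_ne_neg ha0.le
  refine ⟨fun w hw => (slitMobius_mem_grotzschDomain_iff ha0 ha1 (hsub hw)).mpr hw,
    (injOn_slitMobius ha2).mono hsub, fun z hz => ?_⟩
  have hza : z ≠ a := by
    rintro rfl
    have : 1 < a := by simpa [abs_of_pos ha0] using hz.1
    linarith
  obtain ⟨w, hw, rfl⟩ := exists_slitMobius_eq ha2 hza
  exact ⟨w, (slitMobius_mem_grotzschDomain_iff ha0 ha1 hw).mp hz, rfl⟩

theorem conformallyEquiv_slitDisc_grotzschDomain (ha0 : 0 < a) (ha1 : a < 1) :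
    ConformallyEquiv (SlitDisc a) (GrotzschDomain ((1 / 2) * (a + 1 / a))) :=
  ⟨slitMobius a, (differentiableOn_slitMobius a).mono (slitDisc_subset_ne_neg ha0.le),
    bijOn_slitMobius ha0 ha1⟩

end slitMobius

/-- for 0 < α < 1, the conformal module of 𝔻 ∖ [−α,α] equals
(1/2π)·log Φ(½(α + 1/α)). -/
theorem module_of_slit_disc (Φ : ℝ → ℝ) (hΦ : IsGrotzschModulus Φ)
    (α : ℝ) (hα0 : 0 < α) (hα1 : α < 1) :
    HasConformalModule
      (Metric.ball (0 : ℂ) 1 \ {z : ℂ | z.im = 0 ∧ -α ≤ z.re ∧ z.re ≤ α})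
      ((1 / (2 * Real.pi)) * Real.log (Φ ((1 / 2) * (α + 1 / α)))) := by
  obtain ⟨hΦR, hG⟩ := hΦ _ (one_lt_half_mul_add_inv hα0 hα1.ne)
  exact ⟨_, hΦR, (conformallyEquiv_slitDisc_grotzschDomain hα0 hα1).trans hG, rfl⟩
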